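/- For every real number x > 0, I0(x) < √(π/8) · e^x / √x. -/

import Mathlib

/-- The modified Bessel function of the first kind of order `0`:
`I₀(x) = ∑_{m≥0} (1/(m!)²) (x/2)^{2m}`. -/
noncomputable def I0 (x : ℝ) : ℝ :=
  ∑' m : ℕ, (1 / ((Nat.factorial m : ℝ)) ^ 2) * (x / 2) ^ (2 * m)

/-- `(2m+1) · C(2m,m)² ≤ 16^m`. -/
lemma centralBinom_sq_bound (m : ℕ) :
    (2 * m + 1) * (Nat.centralBinom m) ^ 2 ≤ 16 ^ m := by
  induction m with
  | zero => simp [Nat.centralBinom]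
  | succ n ih =>
    have key : (n + 1) * Nat.centralBinom (n + 1) = 2 * (2 * n + 1) * Nat.centralBinom n :=
      Nat.succ_mul_centralBinom_succ n
    have h1 : (2 * (n+1) + 1) * ((n+1) * Nat.centralBinom (n+1))^2
        = (2*n+3) * 4 * (2*n+1) * ((2*n+1) * (Nat.centralBinom n)^2) := by
      rw [key]; ring
    have h2 : (2*n+3) * 4 * (2*n+1) * ((2*n+1) * (Nat.centralBinom n)^2)
        ≤ (2*n+3) * 4 * (2*n+1) * 16^n :=
      Nat.mul_le_mul_left _ ih
    have h3 : (2*n+3) * 4 * (2*n+1) * 16^n ≤ (n+1)^2 * 16^(n+1) := by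
      have : (2*n+3) * 4 * (2*n+1) ≤ (n+1)^2 * 16 := by nlinarith
      calc (2*n+3) * 4 * (2*n+1) * 16^n ≤ (n+1)^2 * 16 * 16^n :=
            Nat.mul_le_mul_right _ this
        _ = (n+1)^2 * 16^(n+1) := by ring
    have h4 : (2 * (n+1) + 1) * ((n+1) * Nat.centralBinom (n+1))^2 ≤ (n+1)^2 * 16^(n+1) :=
      h1 ▸ (h2.trans h3)
    have hpos : 0 < (n+1)^2 := by positivity
    have h5 : (n+1)^2 * ((2*(n+1)+1) * (Nat.centralBinom (n+1))^2) ≤ (n+1)^2 * 16^(n+1) := by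
      calc (n+1)^2 * ((2*(n+1)+1) * (Nat.centralBinom (n+1))^2)
          = (2 * (n+1) + 1) * ((n+1) * Nat.centralBinom (n+1))^2 := by ring
        _ ≤ (n+1)^2 * 16^(n+1) := h4
    exact Nat.le_of_mul_le_mul_left h5 hpos

lemma centralBinom_real_bound (m : ℕ) :
    (Nat.centralBinom m : ℝ) * Real.sqrt (2 * m + 1) ≤ 4 ^ m := by
  have h : ((2 * m + 1 : ℕ) : ℝ) * ((Nat.centralBinom m : ℝ)) ^ 2 ≤ (16 : ℝ) ^ m := by
    exact_mod_cast Nat.cast_le.mpr (centralBinom_sq_bound m)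
  have hu : Real.sqrt (2 * m + 1) ^ 2 = 2 * m + 1 :=
    Real.sq_sqrt (by positivity)
  have h2 : ((Nat.centralBinom m : ℝ) * Real.sqrt (2 * m + 1)) ^ 2 ≤ ((4 : ℝ) ^ m) ^ 2 := by
    have : ((4 : ℝ) ^ m) ^ 2 = 16 ^ m := by
      rw [← pow_mul, mul_comm, pow_mul]; norm_num
    rw [mul_pow, hu, this]
    calc (Nat.centralBinom m : ℝ) ^ 2 * (2 * m + 1)
        = (2 * m + 1) * (Nat.centralBinom m : ℝ) ^ 2 := by ring
      _ ≤ (16 : ℝ) ^ m := by push_cast at h ⊢; linarith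
  exact (pow_le_pow_iff_left₀ (by positivity) (by positivity) two_ne_zero).mp h2


/-- for every `x > 0`, `I₀(x) < √(π/8) · eˣ / √x`. -/
theorem I0_upper_bound (x : ℝ) (hx : 0 < x) :
    I0 x < Real.sqrt (Real.pi / 8) * Real.exp x / Real.sqrt x := by
  have hs : 0 < Real.sqrt x := Real.sqrt_pos.mpr hx
  set s := Real.sqrt x with hsdef
  have hs2 : s ^ 2 = x := Real.sq_sqrt hx.le
  set f : ℕ → ℝ := fun n => x ^ n / n.factorial with hf
  have hf_sum : Summable f := Real.summable_pow_div_factorial x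
  have hfe : Summable (fun m => f (2 * m)) :=
    hf_sum.comp_injective (fun a b h => by omega)
  have hfo : Summable (fun m => f (2 * m + 1)) :=
    hf_sum.comp_injective (fun a b h => by omega)
  -- per-term bound
  have hterm : ∀ m : ℕ, (1 / ((Nat.factorial m : ℝ)) ^ 2) * (x / 2) ^ (2 * m)
      ≤ 1 / (2 * s) * (f (2 * m) + f (2 * m + 1)) := by
    intro m
    have hfm : (0:ℝ) < (Nat.factorial m : ℝ) := by exact_mod_cast m.factorial_pos
    have hfm2 : (0:ℝ) < (Nat.factorial (2 * m) : ℝ) := by exact_mod_cast (2*m).factorial_pos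
    have hfm3 : (0:ℝ) < (Nat.factorial (2 * m + 1) : ℝ) := by
      exact_mod_cast (2*m+1).factorial_pos
    have hcb : ((Nat.factorial m : ℝ)) ^ 2 * (Nat.centralBinom m : ℝ)
        = (Nat.factorial (2 * m) : ℝ) := by
      have := Nat.choose_mul_factorial_mul_factorial (Nat.le_mul_of_pos_left m (by norm_num) : m ≤ 2 * m)
      have h2 : Nat.centralBinom m * Nat.factorial m * Nat.factorial m
          = Nat.factorial (2 * m) := by
        unfold Nat.centralBinom
        rw [show 2 * m - m = m by omega] at this
        exact this
      push_cast [← h2]; ring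
    have hu : (0:ℝ) < Real.sqrt (2 * m + 1) := Real.sqrt_pos.mpr (by positivity)
    set u := Real.sqrt (2 * m + 1) with hudef
    have hu2 : u ^ 2 = 2 * m + 1 := Real.sq_sqrt (by positivity)
    have hcbu : (Nat.centralBinom m : ℝ) * u ≤ 4 ^ m := centralBinom_real_bound m
    -- LHS = x^(2m) * cb / (4^m * (2m)!)
    have hL : (1 / ((Nat.factorial m : ℝ)) ^ 2) * (x / 2) ^ (2 * m)
        = x ^ (2 * m) * (Nat.centralBinom m : ℝ) / (4 ^ m * (Nat.factorial (2 * m) : ℝ)) := by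
      have h4 : (2:ℝ) ^ (2 * m) = 4 ^ m := by
        rw [pow_mul]; norm_num
      have hcbpos : (0:ℝ) < (Nat.centralBinom m : ℝ) := by
        exact_mod_cast m.centralBinom_pos
      rw [div_pow, h4, ← hcb]
      field_simp
    rw [hL]
    -- step: cb / 4^m ≤ 1/u, then AM-GM
    have hx2m : (0:ℝ) ≤ x ^ (2 * m) := by positivity
    have hstep1 : x ^ (2 * m) * (Nat.centralBinom m : ℝ) / (4 ^ m * (Nat.factorial (2 * m) : ℝ))
        ≤ x ^ (2 * m) / ((Nat.factorial (2 * m) : ℝ) * u) := by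
      rw [div_le_div_iff₀ (by positivity) (by positivity)]
      calc x ^ (2*m) * (Nat.centralBinom m : ℝ) * ((Nat.factorial (2*m) : ℝ) * u)
          = x ^ (2*m) * (Nat.factorial (2*m) : ℝ) * ((Nat.centralBinom m : ℝ) * u) := by ring
        _ ≤ x ^ (2*m) * (Nat.factorial (2*m) : ℝ) * 4 ^ m := by
            apply mul_le_mul_of_nonneg_left hcbu (by positivity)
        _ = x ^ (2*m) * (4 ^ m * (Nat.factorial (2*m) : ℝ)) := by ring
    refine hstep1.trans ?_
    -- AM-GM:  2 s u ≤ u^2 + s^2,  so  x^(2m)/((2m)! u) ≤ (1/(2s)) (f(2m)+f(2m+1))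
    have hfac : (Nat.factorial (2 * m + 1) : ℝ) = (2 * m + 1) * (Nat.factorial (2 * m) : ℝ) := by
      rw [Nat.factorial_succ]; push_cast; ring
    have hamgm : 2 * s * u ≤ u ^ 2 + s ^ 2 := by nlinarith [sq_nonneg (u - s)]
    rw [hf]
    simp only [hfac]
    set F : ℝ := (Nat.factorial (2 * m) : ℝ) with hFdef
    calc x ^ (2 * m) / (F * u)
        ≤ x ^ (2 * m) * (u ^ 2 + s ^ 2) / (2 * s * u ^ 2 * F) := by
          rw [div_le_div_iff₀ (by positivity) (by positivity)]
          nlinarith [mul_le_mul_of_nonneg_right hamgm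
            (by positivity : (0:ℝ) ≤ x ^ (2 * m) * u * F)]
      _ = 1 / (2 * s) * (x ^ (2 * m) / F + x ^ (2 * m) * s ^ 2 / (u ^ 2 * F)) := by
          field_simp
      _ = 1 / (2 * s) * (x ^ (2 * m) / F
            + x ^ (2 * m + 1) / ((2 * (m:ℝ) + 1) * F)) := by
          rw [hu2, hs2, ← pow_succ]
  -- sum the bound
  have hsum_rhs : Summable (fun m : ℕ => 1 / (2 * s) * (f (2 * m) + f (2 * m + 1))) :=
    (hfe.add hfo).mul_left _
  have hsum_t : Summable (fun m : ℕ =>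
      (1 / ((Nat.factorial m : ℝ)) ^ 2) * (x / 2) ^ (2 * m)) := by
    apply Summable.of_nonneg_of_le (fun m => by positivity) hterm hsum_rhs
  have hexp : Real.exp x = (∑' m, f (2 * m)) + ∑' m, f (2 * m + 1) := by
    rw [tsum_even_add_odd hfe hfo, Real.exp_eq_exp_ℝ, NormedSpace.exp_eq_tsum_div]
  have hI : I0 x ≤ 1 / (2 * s) * Real.exp x := by
    unfold I0
    calc (∑' m : ℕ, (1 / ((Nat.factorial m : ℝ)) ^ 2) * (x / 2) ^ (2 * m))
        ≤ ∑' m : ℕ, 1 / (2 * s) * (f (2 * m) + f (2 * m + 1)) :=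
          Summable.tsum_le_tsum hterm hsum_t hsum_rhs
      _ = 1 / (2 * s) * ((∑' m, f (2 * m)) + ∑' m, f (2 * m + 1)) := by
          rw [tsum_mul_left, Summable.tsum_add hfe hfo]
      _ = 1 / (2 * s) * Real.exp x := by rw [hexp]
  refine hI.trans_lt ?_
  have hex : 0 < Real.exp x := Real.exp_pos x
  have hhalf : (1:ℝ) / 2 < Real.sqrt (Real.pi / 8) := by
    rw [Real.lt_sqrt (by norm_num)]
    nlinarith [Real.pi_gt_three]
  calc 1 / (2 * s) * Real.exp x = 1 / 2 * (Real.exp x / s) := by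
        field_simp
    _ < Real.sqrt (Real.pi / 8) * (Real.exp x / s) :=
        mul_lt_mul_of_pos_right hhalf (div_pos hex hs)
    _ = Real.sqrt (Real.pi / 8) * Real.exp x / s := by rw [mul_div_assoc]
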